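/- arXiv:1403.0229 — 5 statements merged into one kernel-verified Lean document; each statement's English description precedes it below -/
import Mathlib

section
/- For n ≥ 1, x ∈ {1,...,n} with x ≤ (n-1)/2, and p ∈ (x/n, (x+1)/n), the binomial density satisfies f_{n-1,p}(x) > f_{n,(x+1)/n}(x+1). -/
open Finset

/-- Binomial probability mass function `f_{n,p}(k)`. -/
noncomputable def binomPmf (n : ℕ) (p : ℝ) (k : ℕ) : ℝ :=
  (n.choose k : ℝ) * p ^ k * (1 - p) ^ (n - k)

/-- Binomial cumulative distribution function `F_{n,p}(k) = P(B ≤ k)`. -/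
noncomputable def binomCdf (n : ℕ) (p : ℝ) (k : ℕ) : ℝ :=
  ∑ j ∈ Finset.range (k + 1), binomPmf n p j

/-- Binomial upper tail `P(B ≥ x) = ∑_{k=x}^n f_{n,p}(k)`. -/
noncomputable def binomTail (n : ℕ) (p : ℝ) (x : ℕ) : ℝ :=
  ∑ k ∈ Finset.Icc x n, binomPmf n p k

/-
Since `C(n, x+1) (x+1)/n = C(n-1, x)`, the right-hand side equals `f_{n-1,q}(x)` with
`q = (x+1)/n`, so both sides are values of `r ↦ f_{n-1,r}(x) ∝ r^x (1-r)^(n-1-x)`. This function is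
strictly log-concave on `(0, 1)`, so on `(x/n, q)` it exceeds the smaller of its two endpoint values.
The smaller one is the value at `q`: comparing the endpoints reduces to
`(1 + 1/x)^x ≤ (1 + 1/b)^b` for `x ≤ b = n-1-x`, the monotonicity of `(1 + 1/n)^n`.
-/

open Real Set

lemma add_one_mul_binomPmf_succ (m k : ℕ) (p : ℝ) :
    ((k : ℝ) + 1) * binomPmf (m + 1) p (k + 1) = ((m : ℝ) + 1) * p * binomPmf m p k := by
  have hchoose : ((m : ℝ) + 1) * m.choose k = (m + 1).choose (k + 1) * ((k : ℝ) + 1) := by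
    exact_mod_cast Nat.add_one_mul_choose_eq m k
  simp only [binomPmf, Nat.add_sub_add_right]
  linear_combination p ^ (k + 1) * (1 - p) ^ (m - k) * hchoose.symm

lemma binomPmf_succ_succ_at_mean (m k : ℕ) :
    binomPmf (m + 1) (((k : ℝ) + 1) / (m + 1)) (k + 1) =
      binomPmf m (((k : ℝ) + 1) / (m + 1)) k := by
  have h := add_one_mul_binomPmf_succ m k (((k : ℝ) + 1) / (m + 1))
  rw [mul_div_cancel₀ _ (by positivity)] at h
  exact mul_left_cancel₀ (by positivity) h

lemma strictConcaveOn_mul_log_add_mul_log_one_sub {a b : ℝ} (ha : 0 < a) (hb : 0 ≤ b) :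
    StrictConcaveOn ℝ (Ioo 0 1) (fun r ↦ a * log r + b * log (1 - r)) := by
  have hderiv : ∀ r ∈ Ioo (0 : ℝ) 1,
      HasDerivAt (fun r ↦ a * log r + b * log (1 - r)) (a / r - b / (1 - r)) r := by
    rintro r ⟨hr0, hr1⟩
    have h : HasDerivAt (fun r ↦ a * log r + b * log (1 - r)) (a * r⁻¹ + b * (-1 / (1 - r))) r :=
      ((hasDerivAt_log hr0.ne').const_mul a).add
        ((((hasDerivAt_id r).const_sub 1).log (sub_ne_zero.2 hr1.ne')).const_mul b)
    exact h.congr_deriv (by ring)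
  refine StrictAntiOn.strictConcaveOn_of_deriv (convex_Ioo 0 1)
    (fun r hr ↦ (hderiv r hr).continuousAt.continuousWithinAt) ?_
  rw [interior_Ioo]
  intro r hr s hs hrs
  rw [(hderiv r hr).deriv, (hderiv s hs).deriv]
  have hlog : a / s < a / r := div_lt_div_of_pos_left ha hr.1 hrs
  have hlog_one_sub : b / (1 - r) ≤ b / (1 - s) := by
    gcongr
    linarith [hs.2]
  linarith

lemma binomPmf_eq_choose_mul_exp {m k : ℕ} {r : ℝ} (hr : r ∈ Ioo (0 : ℝ) 1) :
    binomPmf m r k = m.choose k * exp (k * log r + (m - k : ℕ) * log (1 - r)) := by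
  rw [binomPmf, exp_add, ← log_pow, ← log_pow, exp_log (by simp [hr.1]),
    exp_log (pow_pos (sub_pos.2 hr.2) _), mul_assoc]

lemma min_binomPmf_lt_binomPmf {m k : ℕ} (hk : 0 < k) (hkm : k ≤ m) {a c p : ℝ} (ha : 0 < a)
    (hc : c < 1) (hp : p ∈ Ioo a c) :
    min (binomPmf m a k) (binomPmf m c k) < binomPmf m p k := by
  have hac : a < c := hp.1.trans hp.2
  have hmem : ∀ r ∈ Icc a c, r ∈ Ioo (0 : ℝ) 1 := fun r hr ↦ ⟨ha.trans_le hr.1, hr.2.trans_lt hc⟩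
  have hmono : StrictMono fun t ↦ (m.choose k : ℝ) * exp t := fun s t hst ↦
    mul_lt_mul_of_pos_left (exp_lt_exp.2 hst) (by exact_mod_cast Nat.choose_pos hkm)
  have hconc := (strictConcaveOn_mul_log_add_mul_log_one_sub (a := k) (b := (m - k : ℕ))
    (by exact_mod_cast hk) (Nat.cast_nonneg _)).lt_on_openSegment (hmem a ⟨le_rfl, hac.le⟩)
    (hmem c ⟨hac.le, le_rfl⟩) hac.ne (by rwa [openSegment_eq_Ioo hac])
  rw [binomPmf_eq_choose_mul_exp (hmem a ⟨le_rfl, hac.le⟩), binomPmf_eq_choose_mul_exp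
    (hmem c ⟨hac.le, le_rfl⟩), binomPmf_eq_choose_mul_exp (hmem p (Ioo_subset_Icc_self hp)),
    ← hmono.monotone.map_min]
  exact hmono hconc

lemma one_add_inv_pow_le_one_add_inv_succ_pow (n : ℕ) :
    (1 + (n : ℝ)⁻¹) ^ n ≤ (1 + ((n + 1 : ℕ) : ℝ)⁻¹) ^ (n + 1) := by
  rcases Nat.eq_zero_or_pos n with rfl | hn
  · norm_num
  have hn0 : (n : ℝ) ≠ 0 := by exact_mod_cast hn.ne'
  push_cast
  -- Bernoulli's inequality at `t = -1/(n+1)²`, where `1 + (n+1)t = n/(n+1)` and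
  -- `(1 + t)(1 + 1/n) = 1 + 1/(n+1)`.
  set t : ℝ := -(((n : ℝ) + 1) ^ 2)⁻¹
  have hbern := one_add_mul_le_pow (a := t) (by
    have : (((n : ℝ) + 1) ^ 2)⁻¹ ≤ 1 := inv_le_one_of_one_le₀ (by nlinarith [n.cast_nonneg (α := ℝ)])
    linarith) (n + 1)
  push_cast at hbern
  have hmean : 1 + ((n : ℝ) + 1) * t = n / (n + 1) := by simp only [t]; field_simp; ring
  have hcancel : (n : ℝ) / (n + 1) * (1 + (n : ℝ)⁻¹) = 1 := by field_simp
  have hprod : (1 + t) * (1 + (n : ℝ)⁻¹) = 1 + ((n : ℝ) + 1)⁻¹ := by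
    simp only [t]; field_simp; ring
  calc (1 + (n : ℝ)⁻¹) ^ n = (1 + ((n : ℝ) + 1) * t) * (1 + (n : ℝ)⁻¹) ^ (n + 1) := by
        rw [hmean]; linear_combination (-(1 + (n : ℝ)⁻¹) ^ n) * hcancel
    _ ≤ (1 + t) ^ (n + 1) * (1 + (n : ℝ)⁻¹) ^ (n + 1) := by gcongr
    _ = (1 + ((n : ℝ) + 1)⁻¹) ^ (n + 1) := by rw [← mul_pow, hprod]

lemma monotone_one_add_inv_pow : Monotone fun n : ℕ ↦ (1 + (n : ℝ)⁻¹) ^ n :=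
  monotone_nat_of_le_succ one_add_inv_pow_le_one_add_inv_succ_pow

lemma add_one_pow_mul_pow_le {k b : ℕ} (hk : 0 < k) (hkb : k ≤ b) :
    ((k : ℝ) + 1) ^ k * (b : ℝ) ^ b ≤ (k : ℝ) ^ k * ((b : ℝ) + 1) ^ b := by
  have hk0 : (0 : ℝ) < k := by exact_mod_cast hk
  have hb0 : (0 : ℝ) < b := by exact_mod_cast hk.trans_le hkb
  have h : (1 + (k : ℝ)⁻¹) ^ k ≤ (1 + (b : ℝ)⁻¹) ^ b := monotone_one_add_inv_pow hkb
  have hpow (r : ℝ) (hr : r ≠ 0) (j : ℕ) : (1 + r⁻¹) ^ j = (r + 1) ^ j / r ^ j := by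
    rw [← div_pow]; field_simp
  rw [hpow _ hk0.ne', hpow _ hb0.ne', div_le_div_iff₀ (by positivity) (by positivity)] at h
  linarith

lemma binomPmf_succ_div_le_binomPmf_div {k b : ℕ} (hk : 0 < k) (hkb : k ≤ b) :
    binomPmf (k + b) (((k : ℝ) + 1) / (k + b + 1)) k ≤ binomPmf (k + b) (k / (k + b + 1)) k := by
  have h1 : 1 - ((k : ℝ) + 1) / (k + b + 1) = b / (k + b + 1) := by field_simp; ring
  have h2 : 1 - (k : ℝ) / (k + b + 1) = (b + 1) / (k + b + 1) := by field_simp; ring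
  simp only [binomPmf, Nat.add_sub_cancel_left, h1, h2, div_pow, mul_assoc, div_mul_div_comm]
  gcongr ?_ * (?_ / _)
  exact add_one_pow_mul_pow_le hk hkb

theorem binomPmf_ineq_general (n x : ℕ) (p : ℝ) (hx1 : 1 ≤ x)
    (hx : (x : ℝ) ≤ ((n : ℝ) - 1) / 2)
    (hp1 : (x : ℝ) / n < p) (hp2 : p < ((x : ℝ) + 1) / n) :
    binomPmf (n - 1) p x > binomPmf n (((x : ℝ) + 1) / n) (x + 1) := by
  obtain ⟨b, hxb, rfl⟩ : ∃ b, x ≤ b ∧ n = x + b + 1 := by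
    have : 2 * x + 1 ≤ n := by exact_mod_cast (by push_cast; linarith : ((2 * x + 1 : ℕ) : ℝ) ≤ n)
    exact ⟨n - x - 1, by omega, by omega⟩
  rw [Nat.add_sub_cancel, Nat.cast_succ, binomPmf_succ_succ_at_mean]
  push_cast at hp1 hp2 ⊢
  calc binomPmf (x + b) ((x + 1) / (x + b + 1)) x
      = min (binomPmf (x + b) (x / (x + b + 1)) x)
          (binomPmf (x + b) ((x + 1) / (x + b + 1)) x) :=
        (min_eq_right (binomPmf_succ_div_le_binomPmf_div hx1 hxb)).symm
    _ < binomPmf (x + b) p x :=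
        min_binomPmf_lt_binomPmf hx1 (Nat.le_add_right x b) (by positivity)
          (by rw [div_lt_one (by positivity)]; exact_mod_cast (by omega : x + 1 < x + b + 1))
          ⟨hp1, hp2⟩

theorem binomPmf_ineq (n x : ℕ) (p : ℝ) (hn : 1 ≤ n) (hx1 : 1 ≤ x) (hxn : x ≤ n)
    (hx : (x : ℝ) ≤ ((n : ℝ) - 1) / 2)
    (hp1 : (x : ℝ) / n < p) (hp2 : p < ((x : ℝ) + 1) / n) :
    binomPmf (n - 1) p x > binomPmf n (((x : ℝ) + 1) / n) (x + 1) :=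
  binomPmf_ineq_general n x p hx1 hx hp1 hp2
end

section
/- For n ≥ 1 and x ∈ {1,...,n} with x ≤ (n-1)/2, F_{n, x/n}(x) > F_{n, (x+1)/n}(x+1), where F_{n,p} is the binomial CDF. -/
open Finset

namespace BinomAux

lemma choose_id1 (n k : ℕ) (hn : 1 ≤ n) :
    n.choose (k+1) * (k+1) = n * ((n-1).choose k) := by
  have h := Nat.add_one_mul_choose_eq (n-1) k
  rw [Nat.sub_add_cancel hn] at h
  exact h.symm

lemma choose_id2 (n k : ℕ) (hn : 1 ≤ n) :
    n.choose k * (n - k) = n * ((n-1).choose k) := by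
  rw [← Nat.choose_succ_right_eq]
  exact choose_id1 n k hn

noncomputable def dterm (n : ℕ) (p : ℝ) : ℕ → ℝ
  | 0 => 0
  | (k+1) => n * binomPmf (n-1) p k

lemma hasDerivAt_term (n j : ℕ) (hj : j < n) (p : ℝ) :
    HasDerivAt (fun q : ℝ => binomPmf n q j) (dterm n p j - dterm n p (j+1)) p := by
  have hn : 1 ≤ n := by omega
  have h1 : HasDerivAt (fun q : ℝ => (1 - q) ^ (n - j))
      (((n - j : ℕ) : ℝ) * (1 - p) ^ (n - j - 1) * (-1)) p :=
    ((hasDerivAt_pow (n - j) (1 - p)).comp p ((hasDerivAt_id p).const_sub 1))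
  have h2 : HasDerivAt (fun q : ℝ => (n.choose j : ℝ) * q ^ j)
      ((n.choose j : ℝ) * ((j : ℝ) * p ^ (j - 1))) p :=
    (hasDerivAt_pow j p).const_mul _
  have h3 := h2.mul h1
  have hfun : (fun q : ℝ => binomPmf n q j)
      = fun q : ℝ => (n.choose j : ℝ) * q ^ j * (1 - q) ^ (n - j) := by
    funext q; simp [binomPmf]
  rw [hfun]
  refine h3.congr_deriv ?_; symm
  rcases j with _ | k
  · obtain ⟨t, rfl⟩ : ∃ t, n = t + 1 := ⟨n - 1, by omega⟩
    simp [dterm, binomPmf]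
  · obtain ⟨t, rfl⟩ : ∃ t, n = (k + 1) + t + 1 := ⟨n - k - 2, by omega⟩
    have c1 := choose_id1 (k + 1 + t + 1) k (by omega)
    have c2 := choose_id2 (k + 1 + t + 1) (k + 1) (by omega)
    have e0 : k + 1 + t + 1 - 1 = k + 1 + t := by omega
    have e1 : k + 1 + t + 1 - (k + 1) = t + 1 := by omega
    have e2 : k + 1 + t + 1 - (k + 1) - 1 = t := by omega
    have e3 : k + 1 + t - k = t + 1 := by omega
    have e4 : k + 1 + t - (k + 1) = t := by omega
    rw [e1] at c2
    simp only [dterm, binomPmf, e0, e1, e2, e3, e4, Nat.add_sub_cancel]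
    have c1' : ((k+1+t+1).choose (k+1) : ℝ) * (k+1) = (k+1+t+1 : ℕ) * ((k+1+t).choose k : ℕ) := by
      exact_mod_cast congrArg (Nat.cast : ℕ → ℝ) c1
    have c2' : ((k+1+t+1).choose (k+1) : ℝ) * (t+1) = (k+1+t+1 : ℕ) * ((k+1+t).choose (k+1) : ℕ) := by
      exact_mod_cast congrArg (Nat.cast : ℕ → ℝ) c2
    push_cast at c1' c2' ⊢
    have hp : p ^ (k + 1) = p ^ k * p := pow_succ p k
    have hq : (1 - p) ^ (t + 1) = (1 - p) ^ t * (1 - p) := pow_succ (1 - p) t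
    rw [hp, hq]
    linear_combination (-(p ^ k * ((1 - p) ^ t * (1 - p)))) * c1' + (p ^ k * p * (1 - p) ^ t) * c2'

lemma hasDerivAt_binomCdf (n x : ℕ) (hx : x < n) (p : ℝ) :
    HasDerivAt (fun q => binomCdf n q x) (-((n : ℝ) * binomPmf (n-1) p x)) p := by
  have h : HasDerivAt (fun q => ∑ j ∈ range (x+1), binomPmf n q j)
      (∑ j ∈ range (x+1), (dterm n p j - dterm n p (j+1))) p :=
    HasDerivAt.fun_sum (fun j hj => hasDerivAt_term n j (by simp only [mem_range] at hj; omega) p)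
  rw [Finset.sum_range_sub'] at h
  simpa [dterm, binomCdf] using h


lemma hasDerivAt_phi (x m : ℕ) (hx : 1 ≤ x) (hm : 1 ≤ m) (p : ℝ) :
    HasDerivAt (fun q : ℝ => q ^ x * (1 - q) ^ m)
      (p ^ (x-1) * (1 - p) ^ (m-1) * ((x : ℝ) - ((x : ℝ) + m) * p)) p := by
  have h1 : HasDerivAt (fun q : ℝ => (1 - q) ^ m) ((m:ℝ) * (1-p)^(m-1) * (-1)) p :=
    (hasDerivAt_pow m (1-p)).comp p ((hasDerivAt_id p).const_sub 1)
  have h2 := (hasDerivAt_pow x p).mul h1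
  refine h2.congr_deriv ?_; symm
  obtain ⟨x, rfl⟩ : ∃ y, x = y + 1 := ⟨x-1, by omega⟩
  obtain ⟨m, rfl⟩ : ∃ y, m = y + 1 := ⟨m-1, by omega⟩
  simp only [Nat.add_sub_cancel]
  push_cast
  ring

lemma phi_strictMonoOn (x m : ℕ) (hx : 1 ≤ x) (hm : 1 ≤ m) :
    StrictMonoOn (fun q : ℝ => q ^ x * (1 - q) ^ m) (Set.Icc 0 ((x:ℝ)/((x:ℝ)+m))) := by
  have hxm : (0:ℝ) < (x:ℝ) + m := by positivity
  apply strictMonoOn_of_deriv_pos (convex_Icc _ _) (by fun_prop)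
  intro p hp
  rw [interior_Icc, Set.mem_Ioo] at hp
  rw [(hasDerivAt_phi x m hx hm p).deriv]
  have h1 : 0 < p := hp.1
  have hc1 : (x:ℝ)/((x:ℝ)+m) < 1 := by
    rw [div_lt_one hxm]
    have : (1:ℝ) ≤ (m:ℝ) := by exact_mod_cast hm
    linarith
  have h2 : p < 1 := lt_trans hp.2 hc1
  have h3 : p * ((x:ℝ) + m) < x := (lt_div_iff₀ hxm).mp hp.2
  exact mul_pos (mul_pos (pow_pos h1 _) (pow_pos (by linarith) _)) (by linarith)

lemma phi_strictAntiOn (x m : ℕ) (hx : 1 ≤ x) (hm : 1 ≤ m) :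
    StrictAntiOn (fun q : ℝ => q ^ x * (1 - q) ^ m) (Set.Icc ((x:ℝ)/((x:ℝ)+m)) 1) := by
  have hxm : (0:ℝ) < (x:ℝ) + m := by positivity
  apply strictAntiOn_of_deriv_neg (convex_Icc _ _) (by fun_prop)
  intro p hp
  rw [interior_Icc, Set.mem_Ioo] at hp
  rw [(hasDerivAt_phi x m hx hm p).deriv]
  have hc0 : (0:ℝ) < (x:ℝ)/((x:ℝ)+m) := by
    have : (0:ℝ) < (x:ℝ) := by exact_mod_cast hx
    positivity
  have h1 : 0 < p := lt_trans hc0 hp.1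
  have h2 : p < 1 := hp.2
  have h3 : (x:ℝ) < p * ((x:ℝ) + m) := (div_lt_iff₀ hxm).mp hp.1
  exact mul_neg_of_pos_of_neg (mul_pos (pow_pos h1 _) (pow_pos (by linarith) _)) (by linarith)

lemma step_ineq (m : ℕ) (hm : 1 ≤ m) :
    ((m:ℝ)+1)^(2*m+1) ≤ (m:ℝ)^m * ((m:ℝ)+2)^(m+1) := by
  have hm' : (1:ℝ) ≤ (m:ℝ) := by exact_mod_cast hm
  set M : ℝ := (m:ℝ) + 1 with hM
  have hM0 : (0:ℝ) < M := by simp [hM]; positivity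
  have hM2 : (0:ℝ) < M^2 := by positivity
  have hfac : (m:ℝ) * ((m:ℝ)+2) = M^2 * (1 - 1/M^2) := by
    field_simp
    ring
  have hbern : 1 + (m:ℝ) * (-1/M^2) ≤ (1 + (-1/M^2))^m := by
    apply one_add_mul_le_pow
    have : 1/M^2 ≤ 1 := by
      rw [div_le_one hM2]; nlinarith
    have e : (-1:ℝ)/M^2 = -(1/M^2) := by ring
    rw [e]
    linarith
  have hb2 : 1 - (m:ℝ)/M^2 ≤ (1 - 1/M^2)^m := by
    have e1 : 1 + (m:ℝ) * (-1/M^2) = 1 - (m:ℝ)/M^2 := by ring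
    have e2 : (1 + (-1/M^2)) = (1 - 1/M^2) := by ring
    rw [e1, e2] at hbern
    exact hbern
  have key1 : M ≤ (1 - (m:ℝ)/M^2) * ((m:ℝ) + 2) := by
    have e : (1 - (m:ℝ)/M^2) = (M^2 - m)/M^2 := by field_simp
    rw [e, div_mul_eq_mul_div, le_div_iff₀ hM2, hM]
    nlinarith
  calc M^(2*m+1) = M^(2*m) * M := pow_succ M (2*m)
    _ ≤ M^(2*m) * ((1 - (m:ℝ)/M^2) * ((m:ℝ) + 2)) := by
        apply mul_le_mul_of_nonneg_left key1 (by positivity)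
    _ ≤ M^(2*m) * ((1 - 1/M^2)^m * ((m:ℝ) + 2)) := by
        apply mul_le_mul_of_nonneg_left _ (by positivity)
        apply mul_le_mul_of_nonneg_right hb2 (by linarith)
    _ = (M^2 * (1 - 1/M^2))^m * ((m:ℝ) + 2) := by
        rw [mul_pow, ← pow_mul]
        ring
    _ = ((m:ℝ) * ((m:ℝ)+2))^m * ((m:ℝ) + 2) := by rw [hfac]
    _ = (m:ℝ)^m * ((m:ℝ)+2)^(m+1) := by
        rw [mul_pow, pow_succ]
        ring

lemma key_ineq (x : ℕ) (hx : 1 ≤ x) : ∀ m : ℕ, x ≤ m →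
    ((x:ℝ)+1)^x * (m:ℝ)^m ≤ (x:ℝ)^x * ((m:ℝ)+1)^m := by
  intro m hm
  induction m, hm using Nat.le_induction with
  | base => exact le_of_eq (by ring)
  | succ m hm ih =>
    have hm1 : 1 ≤ m := le_trans hx hm
    have hm1' : (1:ℝ) ≤ (m:ℝ) := by exact_mod_cast hm1
    have hstep := step_ineq m hm1
    push_cast
    have h1 : ((x:ℝ)+1)^x * (m:ℝ)^m * ((m:ℝ)+1)^(m+1) ≤ (x:ℝ)^x * ((m:ℝ)+1)^m * ((m:ℝ)+1)^(m+1) :=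
      mul_le_mul_of_nonneg_right ih (by positivity)
    have h2 : (x:ℝ)^x * ((m:ℝ)+1)^m * ((m:ℝ)+1)^(m+1) = (x:ℝ)^x * ((m:ℝ)+1)^(2*m+1) := by
      rw [mul_assoc, ← pow_add]
      ring_nf
    have h3 : (x:ℝ)^x * ((m:ℝ)+1)^(2*m+1) ≤ (x:ℝ)^x * ((m:ℝ)^m * ((m:ℝ)+2)^(m+1)) :=
      mul_le_mul_of_nonneg_left hstep (by positivity)
    have h4 : ((x:ℝ)+1)^x * (m:ℝ)^m * ((m:ℝ)+1)^(m+1) ≤ (x:ℝ)^x * ((m:ℝ)^m * ((m:ℝ)+2)^(m+1)) := by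
      calc _ ≤ _ := h1
        _ = _ := h2
        _ ≤ _ := h3
    have hmpos : (0:ℝ) < (m:ℝ)^m := by positivity
    have h5 : (m:ℝ)^m * (((x:ℝ)+1)^x * ((m:ℝ)+1)^(m+1)) ≤ (m:ℝ)^m * ((x:ℝ)^x * ((m:ℝ)+2)^(m+1)) := by
      calc (m:ℝ)^m * (((x:ℝ)+1)^x * ((m:ℝ)+1)^(m+1)) = ((x:ℝ)+1)^x * (m:ℝ)^m * ((m:ℝ)+1)^(m+1) := by ring
        _ ≤ (x:ℝ)^x * ((m:ℝ)^m * ((m:ℝ)+2)^(m+1)) := h4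
        _ = (m:ℝ)^m * ((x:ℝ)^x * ((m:ℝ)+2)^(m+1)) := by ring
    have := (mul_le_mul_iff_right₀ hmpos).mp h5
    calc ((x:ℝ)+1)^x * ((m:ℝ)+1)^(m+1) ≤ (x:ℝ)^x * ((m:ℝ)+2)^(m+1) := this
      _ = (x:ℝ)^x * ((m:ℝ)+1+1)^(m+1) := by ring_nf


end BinomAux

open BinomAux intervalIntegral in
theorem binomCdf_strict_decrease (n x : ℕ) (hn : 1 ≤ n) (hx1 : 1 ≤ x) (hxn : x ≤ n)
    (hx : (x : ℝ) ≤ ((n : ℝ) - 1) / 2) :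
    binomCdf n ((x : ℝ) / n) x > binomCdf n (((x : ℝ) + 1) / n) (x + 1) := by
  have h2x : 2 * x + 1 ≤ n := by
    have h : ((2 * x + 1 : ℕ) : ℝ) ≤ (n : ℝ) := by push_cast; linarith
    exact_mod_cast h
  have hxn' : x < n := by omega
  set m : ℕ := n - 1 - x with hm
  have hxm : x ≤ m := by omega
  have hm1 : 1 ≤ m := le_trans hx1 hxm
  have hnm : n = x + m + 1 := by omega
  have hn1 : n - 1 - x = m := by omega
  have hnR : (n : ℝ) = (x:ℝ) + m + 1 := by rw [hnm]; push_cast; ring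
  have hnpos : (0:ℝ) < (n:ℝ) := by positivity
  have hxmpos : (0:ℝ) < (x:ℝ) + m := by positivity
  have hxR : (1:ℝ) ≤ (x:ℝ) := by exact_mod_cast hx1
  have hmR : (1:ℝ) ≤ (m:ℝ) := by exact_mod_cast hm1
  set a : ℝ := (x:ℝ)/n with ha
  set b : ℝ := ((x:ℝ)+1)/n with hb
  set c : ℝ := (x:ℝ)/((x:ℝ)+m) with hc
  set φ : ℝ → ℝ := fun q => q ^ x * (1 - q) ^ m with hφ
  -- basic order facts
  have hab : a < b := by
    rw [ha, hb, div_lt_div_iff₀ hnpos hnpos]; nlinarith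
  have ha0 : 0 ≤ a := by positivity
  have hac : a ≤ c := by
    rw [ha, hc, div_le_div_iff₀ hnpos hxmpos]; nlinarith
  have hcb : c < b := by
    rw [hc, hb, div_lt_div_iff₀ hxmpos hnpos]; nlinarith
  have hb1 : b ≤ 1 := by
    rw [hb, div_le_one hnpos]; rw [hnR]; linarith
  -- phi at endpoints
  have hone_sub_a : 1 - a = ((m:ℝ)+1)/n := by
    rw [ha, hnR]; field_simp; ring
  have hone_sub_b : 1 - b = (m:ℝ)/n := by
    rw [hb, hnR]; field_simp; ring
  have hphiab : φ b ≤ φ a := by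
    have hkey := key_ineq x hx1 m hxm
    show b ^ x * (1 - b) ^ m ≤ a ^ x * (1 - a) ^ m
    rw [hone_sub_a, hone_sub_b, ha, hb, div_pow, div_pow, div_pow, div_pow,
      div_mul_div_comm, div_mul_div_comm]
    gcongr ?_ / _
  -- pointwise bound on [a,b]
  have hmono := phi_strictMonoOn x m hx1 hm1
  have hanti := phi_strictAntiOn x m hx1 hm1
  rw [← hc] at hmono hanti
  have hcmem : c ∈ Set.Icc c (1:ℝ) := ⟨le_refl c, le_trans hcb.le hb1⟩
  have hbmem : b ∈ Set.Icc c (1:ℝ) := ⟨hcb.le, hb1⟩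
  have hpoint : ∀ p ∈ Set.Icc a b, φ b ≤ φ p := by
    intro p hp
    rcases le_total p c with h | h
    · have h1 : φ a ≤ φ p := by
        rcases eq_or_lt_of_le hp.1 with he | hlt
        · rw [he]
        · exact (hmono ⟨ha0, hac⟩ ⟨le_trans ha0 hp.1, h⟩ hlt).le
      linarith [hphiab]
    · rcases eq_or_lt_of_le hp.2 with he | hlt
      · rw [he]
      · exact (hanti ⟨h, le_trans hp.2 hb1⟩ hbmem hlt).le
  have hstrict : φ b < φ c := hanti hcmem hbmem hcb
  -- from φ to the pmf g
  have hCpos : (0:ℝ) < ((n-1).choose x : ℝ) := by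
    exact_mod_cast Nat.choose_pos (by omega : x ≤ n - 1)
  have hgdef : ∀ q : ℝ, binomPmf (n-1) q x = ((n-1).choose x : ℝ) * φ q := by
    intro q
    simp only [binomPmf, hφ, hn1]
    ring
  -- derivative and FTC
  have hderiv : ∀ p ∈ Set.uIcc a b, HasDerivAt (fun q => binomCdf n q x)
      (-((n:ℝ) * binomPmf (n-1) p x)) p := fun p _ => hasDerivAt_binomCdf n x hxn' p
  have hcont : Continuous fun p : ℝ => (n:ℝ) * binomPmf (n-1) p x := by
    have hrw : (fun p : ℝ => (n:ℝ) * binomPmf (n-1) p x)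
        = fun p : ℝ => (n:ℝ) * (((n-1).choose x : ℝ) * p ^ x * (1-p) ^ (n-1-x)) := rfl
    rw [hrw]; fun_prop
  have hFTC := intervalIntegral.integral_eq_sub_of_hasDerivAt hderiv
    (hcont.neg.intervalIntegrable a b)
  rw [intervalIntegral.integral_neg] at hFTC
  -- strict integral inequality
  have hlt := intervalIntegral.integral_lt_integral_of_continuousOn_of_le_of_exists_lt
    (f := fun _ : ℝ => (n:ℝ) * binomPmf (n-1) b x)
    (g := fun p : ℝ => (n:ℝ) * binomPmf (n-1) p x)
    hab continuousOn_const hcont.continuousOn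
    (by
      intro p hp
      have hp' : p ∈ Set.Icc a b := ⟨hp.1.le, hp.2⟩
      simp only [hgdef]
      have h1 := hpoint p hp'
      have h2 : ((n-1).choose x : ℝ) * φ b ≤ ((n-1).choose x : ℝ) * φ p :=
        mul_le_mul_of_nonneg_left h1 hCpos.le
      exact mul_le_mul_of_nonneg_left h2 hnpos.le)
    ⟨c, ⟨hac, hcb.le⟩, by
      simp only [hgdef]
      have h2 : ((n-1).choose x : ℝ) * φ b < ((n-1).choose x : ℝ) * φ c :=
        mul_lt_mul_of_pos_left hstrict hCpos
      exact mul_lt_mul_of_pos_left h2 hnpos⟩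
  rw [intervalIntegral.integral_const, smul_eq_mul] at hlt
  have hba : b - a = 1/(n:ℝ) := by
    rw [ha, hb]; field_simp; ring
  have hconstval : (b - a) * ((n:ℝ) * binomPmf (n-1) b x) = binomPmf (n-1) b x := by
    rw [hba]; field_simp
  rw [hconstval] at hlt
  -- split the CDF at x+1 and shift the pmf
  have hsplit : binomCdf n b (x+1) = binomCdf n b x + binomPmf n b (x+1) := by
    simp only [binomCdf]
    rw [Finset.sum_range_succ]
  have hshift : binomPmf n b (x+1) = binomPmf (n-1) b x := by
    have c1 := congrArg (Nat.cast (R := ℝ)) (choose_id1 n x hn)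
    push_cast at c1
    have hbmul : (n.choose (x+1) : ℝ) * b = ((n-1).choose x : ℝ) := by
      rw [hb]
      field_simp
      linarith [c1]
    have e : n - (x+1) = n - 1 - x := by omega
    simp only [binomPmf, e, pow_succ]
    linear_combination (b ^ x * (1-b) ^ (n-1-x)) * hbmul
  -- put everything together
  rw [hsplit, hshift]
  linarith [hFTC, hlt]
end

section
/- Let n ≥ 1, β ∈ [β_n, 1) where β_n := F_{n,1/n}(1), and x ∈ {2,...,n}. Let g_n(x) be the unique p ∈ [0,1] with P(Binomial(n,p) ≥ x) = 1 - β. Then g_n(x) ≤ (x-1)/n. -/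
open Finset

/-!
Write `m = x - 1`, so that `P(B ≥ x) = 1 - F_{n,p}(m)`. Since `p ↦ F_{n,p}(m)` is strictly
decreasing on `[0, 1]` (its derivative is `-n f_{n-1,p}(m)`), it suffices to show
`F_{n,m/n}(m) ≤ F_{n,1/n}(1) ≤ β`. For `m = 1` this is an equality. For `m ≥ 2`, the value
`F_{n,m/n}(m)` decreases in `n` (mean value theorem, using that `p ↦ f_{n,p}(m)` peaks at
`m / n`), so it is at most its value `1 - (m / (m + 1)) ^ (m + 1) ≤ 1 - (2/3)^3 = 19/27` at
`n = m + 1`, whereas `F_{n,1/n}(1) = (1 - 1/n)^(n-1) (2 - 1/n) ≥ 19/27` for `n ≥ 3`.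
-/

lemma binomCdf_self (n : ℕ) (p : ℝ) : binomCdf n p n = 1 := by
  have h := add_pow p (1 - p) n
  rw [add_sub_cancel, one_pow] at h
  rw [binomCdf, h]
  exact sum_congr rfl fun j _ => by rw [binomPmf]; ring

lemma binomCdf_add_binomTail {n m : ℕ} (p : ℝ) (hm : m ≤ n) :
    binomCdf n p m + binomTail n p (m + 1) = 1 := by
  rw [← binomCdf_self n p, binomCdf, binomCdf, binomTail, range_eq_Ico, range_eq_Ico,
    ← Ico_add_one_right_eq_Icc, sum_Ico_consecutive _ (Nat.zero_le _) (by omega)]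

lemma binomCdf_succ_eq {n m : ℕ} (p : ℝ) (hm : m ≤ n) :
    binomCdf (n + 1) p m = binomCdf n p m - p * binomPmf n p m := by
  induction m with
  | zero =>
    simp only [binomCdf, zero_add, range_one, sum_singleton, binomPmf, Nat.choose_zero_right,
      Nat.cast_one, pow_zero, one_mul, tsub_zero, pow_succ]
    ring
  | succ m ih =>
    simp only [binomCdf, sum_range_succ] at ih ⊢
    rw [ih (by omega)]
    obtain ⟨k, rfl⟩ : ∃ k, n = m + 1 + k := ⟨n - (m + 1), by omega⟩
    simp only [binomPmf, Nat.choose_succ_succ', show m + 1 + k - m = k + 1 by omega,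
      show m + 1 + k + 1 - (m + 1) = k + 1 by omega, Nat.add_sub_cancel_left]
    push_cast
    ring

lemma hasDerivAt_binomPmf_succ {n k : ℕ} (hk : k < n) (p : ℝ) :
    HasDerivAt (fun q => binomPmf (n + 1) q (k + 1))
      ((n + 1) * (binomPmf n p k - binomPmf n p (k + 1))) p := by
  obtain ⟨j, rfl⟩ : ∃ j, n = k + 1 + j := ⟨n - (k + 1), by omega⟩
  have hpow := (((hasDerivAt_id p).pow (k + 1)).mul
    ((hasDerivAt_id p).const_sub 1 |>.pow (j + 1))).const_mul ((k + 1 + j + 1).choose (k + 1) : ℝ)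
  have hleft := congrArg (Nat.cast : ℕ → ℝ) (Nat.add_one_mul_choose_eq (k + 1 + j) k)
  have hright := congrArg (Nat.cast : ℕ → ℝ) (Nat.choose_mul_succ_eq (k + 1 + j) (k + 1))
  rw [show k + 1 + j + 1 - (k + 1) = j + 1 by omega] at hright
  refine (hpow.congr_of_eventuallyEq (.of_forall fun q => ?_)).congr_deriv ?_
  · simp only [binomPmf, show k + 1 + j + 1 - (k + 1) = j + 1 by omega, Pi.mul_apply, Pi.pow_apply,
      id]
    ring
  · simp only [binomPmf, show k + 1 + j - k = j + 1 by omega,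
      show k + 1 + j - (k + 1) = j by omega, Pi.pow_apply, id, Nat.add_sub_cancel]
    push_cast at hleft hright ⊢
    linear_combination (p ^ (k + 1) * (1 - p) ^ j) * hright - (p ^ k * (1 - p) ^ (j + 1)) * hleft

lemma hasDerivAt_binomCdf_succ {n m : ℕ} (hm : m ≤ n) (p : ℝ) :
    HasDerivAt (fun q => binomCdf (n + 1) q m) (-((n + 1) * binomPmf n p m)) p := by
  induction m with
  | zero =>
    have h := ((hasDerivAt_id p).const_sub 1).pow (n + 1)
    refine (h.congr_of_eventuallyEq (.of_forall fun q => ?_)).congr_deriv ?_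
    · simp [binomCdf, binomPmf]
    · simp [binomPmf]
  | succ m ih =>
    have h := (ih (by omega)).add (hasDerivAt_binomPmf_succ (by omega : m < n) p)
    refine (h.congr_of_eventuallyEq (.of_forall fun q => ?_)).congr_deriv (by ring)
    simp only [binomCdf, sum_range_succ, Pi.add_apply]

lemma binomCdf_strictAntiOn {n m : ℕ} (hmn : m < n) :
    StrictAntiOn (fun p => binomCdf n p m) (Set.Icc 0 1) := by
  obtain ⟨n, rfl⟩ : ∃ k, n = k + 1 := ⟨n - 1, by omega⟩
  have hderiv p := hasDerivAt_binomCdf_succ (Nat.le_of_lt_succ hmn) p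
  refine strictAntiOn_of_deriv_neg (convex_Icc 0 1)
    (fun p _ => (hderiv p).continuousAt.continuousWithinAt) fun p hp => ?_
  rw [interior_Icc] at hp
  rw [(hderiv p).deriv, neg_lt_zero, binomPmf]
  have hchoose : (0 : ℝ) < n.choose m := by exact_mod_cast Nat.choose_pos (by omega)
  have hp1 : 0 < 1 - p := sub_pos.2 hp.2
  have hp0 := hp.1
  positivity

lemma pow_mul_pow_le_one_of_mul_add_mul_le {a b : ℝ} (ha : 0 ≤ a) (hb : 0 ≤ b) {m k : ℕ}
    (h : m * a + k * b ≤ m + k) : a ^ m * b ^ k ≤ 1 := by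
  calc a ^ m * b ^ k ≤ Real.exp (a - 1) ^ m * Real.exp (b - 1) ^ k := by
        gcongr <;> linarith [Real.add_one_le_exp (a - 1), Real.add_one_le_exp (b - 1)]
    _ = Real.exp (m * a + k * b - (m + k)) := by
        rw [← Real.exp_nat_mul, ← Real.exp_nat_mul, ← Real.exp_add]; ring_nf
    _ ≤ 1 := Real.exp_le_one_iff.2 (by linarith)

lemma pow_mul_one_sub_pow_le {m k : ℕ} {t p : ℝ} (ht0 : 0 < t) (ht1 : t < 1)
    (hmt : (m + k) * t = m) (hp0 : 0 ≤ p) (hp1 : p ≤ 1) :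
    p ^ m * (1 - p) ^ k ≤ t ^ m * (1 - t) ^ k := by
  have ht1' : 0 < 1 - t := sub_pos.2 ht1
  have hm : (m : ℝ) / t = m + k := by rw [div_eq_iff ht0.ne']; linarith
  have hk : (k : ℝ) / (1 - t) = m + k := by rw [div_eq_iff ht1'.ne']; linarith
  have hsum : m * (p / t) + k * ((1 - p) / (1 - t)) = m + k := by
    calc m * (p / t) + k * ((1 - p) / (1 - t)) = m / t * p + k / (1 - t) * (1 - p) := by ring
      _ = m + k := by rw [hm, hk]; ring
  have key := pow_mul_pow_le_one_of_mul_add_mul_le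
    (div_nonneg hp0 ht0.le) (div_nonneg (sub_nonneg.2 hp1) ht1'.le) hsum.le
  rwa [div_pow, div_pow, div_mul_div_comm, div_le_one (by positivity)] at key

lemma binomPmf_le_binomPmf_div {n m : ℕ} (hm : 0 < m) (hmn : m < n) {p : ℝ} (hp0 : 0 ≤ p)
    (hp1 : p ≤ 1) : binomPmf n p m ≤ binomPmf n (m / n) m := by
  obtain ⟨k, rfl⟩ : ∃ k, n = m + k := ⟨n - m, by omega⟩
  have hn : (0 : ℝ) < m + k := by positivity
  unfold binomPmf
  rw [mul_assoc, mul_assoc, Nat.add_sub_cancel_left]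
  refine mul_le_mul_of_nonneg_left ?_ (Nat.cast_nonneg _)
  push_cast
  have hm' : (0 : ℝ) < m := by exact_mod_cast hm
  refine pow_mul_one_sub_pow_le (div_pos hm' hn) ?_ (mul_div_cancel₀ _ hn.ne') hp0 hp1
  rw [div_lt_one hn]
  exact_mod_cast hmn

/- The derivative `-(n + 1) f_{n,p}(m)` of `p ↦ F_{n+1,p}(m)` is smallest at the mode `t = m / n`,
and `t - m / (n + 1) = t / (n + 1)`, so the mean value theorem loses exactly the term
`t f_{n,t}(m)` by which `F_{n+1,t}(m)` falls short of `F_{n,t}(m)`. -/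
lemma binomCdf_succ_div_succ_le {n m : ℕ} (hm : 0 < m) (hmn : m < n) :
    binomCdf (n + 1) (m / (n + 1 : ℕ)) m ≤ binomCdf n (m / n) m := by
  have hn : (0 : ℝ) < n := by exact_mod_cast hm.trans hmn
  have hn1 : (0 : ℝ) < n + 1 := by linarith
  set t : ℝ := m / n with ht
  set p₀ : ℝ := m / (n + 1 : ℕ) with hp₀
  have ht1 : t ≤ 1 := by rw [ht, div_le_one hn]; exact_mod_cast hmn.le
  have hp₀t : p₀ ≤ t := by rw [hp₀, ht]; push_cast; gcongr; linarith
  have hderiv p := hasDerivAt_binomCdf_succ hmn.le p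
  have hmvt := (convex_Icc (0 : ℝ) 1).mul_sub_le_image_sub_of_le_deriv
    (fun p _ => (hderiv p).continuousAt.continuousWithinAt)
    (fun p _ => (hderiv p).differentiableAt.differentiableWithinAt)
    (C := -((n + 1) * binomPmf n t m)) (fun p hp => by
      rw [interior_Icc] at hp
      rw [(hderiv p).deriv, neg_le_neg_iff]
      gcongr
      exact binomPmf_le_binomPmf_div hm hmn hp.1.le hp.2.le)
    p₀ ⟨by positivity, hp₀t.trans ht1⟩ t ⟨by positivity, ht1⟩ hp₀t
  have hgap : (n + 1) * (t - p₀) = t := by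
    rw [hp₀, ht]; push_cast; field_simp; ring
  rw [binomCdf_succ_eq t hmn.le] at hmvt
  linear_combination hmvt + binomPmf n t m * hgap

lemma binomCdf_div_le_one_sub_pow {n m : ℕ} (hm : 0 < m) (hmn : m < n) :
    binomCdf n (m / n) m ≤ 1 - ((m : ℝ) / (m + 1)) ^ (m + 1) := by
  induction n, hmn using Nat.le_induction with
  | base =>
    have h := binomCdf_self (m + 1) (m / (m + 1 : ℕ))
    rw [binomCdf, sum_range_succ, ← binomCdf] at h
    simp only [binomPmf, Nat.choose_self, Nat.sub_self] at h
    push_cast at h ⊢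
    linarith
  | succ n hmn ih => exact (binomCdf_succ_div_succ_le hm hmn).trans ih

/- AM-GM with weights `3` and `m - 2` compares `(m / (m + 1)) ^ (m + 1)` with its value at
`m = 2`. -/
lemma two_thirds_pow_three_le {m : ℕ} (hm : 2 ≤ m) :
    (2 / 3 : ℝ) ^ 3 ≤ ((m : ℝ) / (m + 1)) ^ (m + 1) := by
  obtain ⟨k, rfl⟩ : ∃ k, m = k + 2 := ⟨m - 2, by omega⟩
  set r : ℝ := ((k + 2 : ℕ) : ℝ) / ((k + 2 : ℕ) + 1) with hr
  have hr0 : 0 < r := by positivity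
  have hsum : (3 : ℕ) * (2 / 3 / r) + k * (1 / r) = (3 : ℕ) + k := by
    rw [hr]; push_cast; field_simp; ring
  have key := pow_mul_pow_le_one_of_mul_add_mul_le (by positivity) (by positivity) hsum.le
  calc (2 / 3 : ℝ) ^ 3 = (2 / 3 / r) ^ 3 * (1 / r) ^ k * r ^ (k + 2 + 1) := by
        rw [show k + 2 + 1 = 3 + k by ring, pow_add, div_pow, one_div_pow]
        field_simp
    _ ≤ 1 * r ^ (k + 2 + 1) := by gcongr
    _ = r ^ (k + 2 + 1) := one_mul _

lemma binomCdf_one_div_eq (k : ℕ) :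
    binomCdf (k + 1) (1 / (k + 1 : ℕ)) 1 =
      ((k : ℝ) / (k + 1)) ^ k * ((2 * k + 1) / (k + 1)) := by
  have hk : (k : ℝ) + 1 ≠ 0 := by positivity
  have hq : 1 - 1 / ((k : ℝ) + 1) = k / (k + 1) := by field_simp; ring
  simp only [binomCdf, sum_range_succ, sum_range_zero, binomPmf, Nat.choose_zero_right,
    Nat.choose_one_right, Nat.sub_zero, Nat.add_sub_cancel]
  push_cast
  rw [hq, pow_succ]
  field_simp
  ring

lemma exp_neg_one_le_div_pow (k : ℕ) : Real.exp (-1) ≤ ((k : ℝ) / (k + 1)) ^ k := by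
  have h : ((k : ℝ) / (k + 1)) ^ k = ((1 + (k : ℝ)⁻¹) ^ k)⁻¹ := by
    rcases eq_or_ne k 0 with rfl | hk
    · simp
    · rw [← inv_pow]; congr 1; field_simp
  rw [h, Real.exp_neg]
  exact inv_anti₀ (by positivity) Real.one_add_inv_pow_le_exp

lemma binomCdf_one_div_ge {n : ℕ} (hn : 3 ≤ n) : (19 / 27 : ℝ) ≤ binomCdf n (1 / n) 1 := by
  obtain ⟨k, rfl⟩ : ∃ k, n = k + 1 := ⟨n - 1, by omega⟩
  rw [binomCdf_one_div_eq]
  rcases le_or_gt k 10 with hk | hk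
  · interval_cases k <;> norm_num
  · have hexp : (19 / 27 : ℝ) ≤ Real.exp (-1) * (23 / 12) := by
      rw [Real.exp_neg, ← div_eq_inv_mul, le_div_iff₀ (Real.exp_pos 1)]
      linarith [Real.exp_one_lt_d9]
    have hfrac : (23 / 12 : ℝ) ≤ (2 * k + 1) / (k + 1) := by
      have : (11 : ℝ) ≤ k := by exact_mod_cast hk
      rw [le_div_iff₀ (by positivity)]
      linarith
    exact hexp.trans (mul_le_mul (exp_neg_one_le_div_pow k) hfrac (by norm_num) (by positivity))

lemma binomCdf_div_le_binomCdf_one_div {n m : ℕ} (hm : 0 < m) (hmn : m < n) :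
    binomCdf n (m / n) m ≤ binomCdf n (1 / n) 1 := by
  obtain rfl | hm2 : m = 1 ∨ 2 ≤ m := by omega
  · rw [Nat.cast_one]
  calc binomCdf n (m / n) m ≤ 1 - ((m : ℝ) / (m + 1)) ^ (m + 1) :=
        binomCdf_div_le_one_sub_pow hm hmn
    _ ≤ 1 - (2 / 3) ^ 3 := by linarith [two_thirds_pow_three_le hm2]
    _ = 19 / 27 := by norm_num
    _ ≤ binomCdf n (1 / n) 1 := binomCdf_one_div_ge (by omega)

theorem quantile_le_general (n x : ℕ) (β g : ℝ)
    (hβ1 : binomCdf n ((1 : ℝ) / n) 1 ≤ β)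
    (hx2 : 2 ≤ x) (hxn : x ≤ n)
    (hg1 : g ≤ 1) (hg : binomTail n g x = 1 - β) :
    g ≤ ((x : ℝ) - 1) / n := by
  obtain ⟨m, rfl⟩ : ∃ m, x = m + 1 := ⟨x - 1, by omega⟩
  rw [Nat.cast_add_one, add_sub_cancel_right]
  by_contra! hlt
  have hn : (0 : ℝ) < n := by exact_mod_cast (by omega : 0 < n)
  have hmode : (m : ℝ) / n ∈ Set.Icc 0 1 :=
    ⟨by positivity, (div_le_one hn).2 (by exact_mod_cast (by omega : m ≤ n))⟩
  have hanti := binomCdf_strictAntiOn (by omega : m < n) hmode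
    ⟨(by positivity : (0 : ℝ) ≤ m / n).trans hlt.le, hg1⟩ hlt
  have hβ := binomCdf_div_le_binomCdf_one_div (by omega : 0 < m) (by omega : m < n)
  linarith [binomCdf_add_binomTail g (by omega : m ≤ n)]

theorem quantile_le (n x : ℕ) (β g : ℝ) (hn : 1 ≤ n)
    (hβ1 : binomCdf n ((1 : ℝ) / n) 1 ≤ β) (hβ2 : β < 1)
    (hx2 : 2 ≤ x) (hxn : x ≤ n)
    (hg0 : 0 ≤ g) (hg1 : g ≤ 1) (hg : binomTail n g x = 1 - β) :
    g ≤ ((x : ℝ) - 1) / n :=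
  quantile_le_general n x β g hβ1 hx2 hxn hg1 hg
end

section
/- The sequence β_n := P(Binomial(n, 1/n) ∈ {0,1}) = (1-1/n)^n + (1-1/n)^{n-1} is strictly decreasing in n ≥ 1 and converges to 2/e as n → ∞. -/
/-!
Put `a = n`. Since `1 - 1/a = (1 - 1/a²)(1 - 1/(a+1))`, dividing `β (n+1) < β n` by
`(1 - 1/(a+1))^(n-1)` turns it into
`(1 - 1/(a+1))² + (1 - 1/(a+1)) < (1 - 1/a²)^(n-1) (2 - 1/a)`.
The third-order Bonferroni lower bound for `(1 - 1/a²)^(n-1)` reduces this to a polynomial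
inequality in `n - 1` all of whose coefficients are positive.
The limit follows from `(1 - 1/n)^n → e⁻¹`.
-/

open Filter Topology

noncomputable def betaSeq (n : ℕ) : ℝ := (1 - 1 / (n : ℝ)) ^ n + (1 - 1 / (n : ℝ)) ^ (n - 1)

theorem bonferroni_cubic_le_one_sub_pow (m : ℕ) {x : ℝ} (hx : x ≤ 1) :
    1 - m * x + m * (m - 1) / 2 * x ^ 2 - m * (m - 1) * (m - 2) / 6 * x ^ 3 ≤ (1 - x) ^ m := by
  induction m with
  | zero => norm_num
  | succ k ih =>
    have hk3 : (0 : ℝ) ≤ k * (k - 1) * (k - 2) := by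
      rcases k with _ | _ | j
      · norm_num
      · norm_num
      · push_cast; ring_nf; positivity
    have hstep := mul_le_mul_of_nonneg_left ih (sub_nonneg.2 hx)
    rw [pow_succ' (1 - x)]
    push_cast
    nlinarith [mul_nonneg hk3 (pow_two_nonneg (x ^ 2))]

theorem one_sub_inv_add_one_sq_add_lt {m : ℕ} {a : ℝ} (ha : a = m + 1) :
    (1 - 1 / (a + 1)) ^ 2 + (1 - 1 / (a + 1)) < (1 - 1 / a ^ 2) ^ m * (2 - 1 / a) := by
  have ha1 : 1 ≤ a := by simp [ha]
  have hcubic := bonferroni_cubic_le_one_sub_pow m (x := 1 / a ^ 2)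
    (div_le_one_of_le₀ (one_le_pow₀ ha1) (sq_nonneg a))
  refine lt_of_lt_of_le ?_ (mul_le_mul_of_nonneg_right hcubic ?_)
  · rw [← sub_pos]
    -- the numerator of the difference, expanded in `m = a - 1`
    have hpoly : 0 < (m : ℝ) ^ 6 + 6 * m ^ 5 + 20 * m ^ 4 + 29 * m ^ 3 + 18 * m ^ 2 + 16 * m + 6 := by
      positivity
    convert div_pos hpoly (by positivity : (0 : ℝ) < 6 * a ^ 7 * (a + 1) ^ 2) using 1
    subst ha
    field_simp
    ring
  · rw [sub_nonneg, div_le_iff₀ (by linarith)]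
    linarith

theorem betaSeq_succ_lt {n : ℕ} (hn : 1 ≤ n) : betaSeq (n + 1) < betaSeq n := by
  obtain ⟨m, rfl⟩ := Nat.exists_eq_add_of_le' hn
  set a : ℝ := m + 1 with ha
  have ha0 : 0 < a := by positivity
  have hfactor : 1 - 1 / a = (1 - 1 / a ^ 2) * (1 - 1 / (a + 1)) := by
    field_simp
    ring
  have hq : 0 < 1 - 1 / (a + 1) := by
    rw [sub_pos, div_lt_one (by positivity)]
    linarith
  unfold betaSeq
  push_cast
  simp only [← ha, add_assoc, one_add_one_eq_two]
  calc (1 - 1 / (a + 1)) ^ (m + 2) + (1 - 1 / (a + 1)) ^ (m + 1)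
      = ((1 - 1 / (a + 1)) ^ 2 + (1 - 1 / (a + 1))) * (1 - 1 / (a + 1)) ^ m := by ring
    _ < (1 - 1 / a ^ 2) ^ m * (2 - 1 / a) * (1 - 1 / (a + 1)) ^ m :=
        mul_lt_mul_of_pos_right (one_sub_inv_add_one_sq_add_lt ha) (pow_pos hq m)
    _ = ((1 - 1 / a ^ 2) * (1 - 1 / (a + 1))) ^ m * ((1 - 1 / a) + 1) := by rw [mul_pow]; ring
    _ = (1 - 1 / a) ^ (m + 1) + (1 - 1 / a) ^ m := by rw [← hfactor]; ring

theorem betaSeq_strictAntiOn : StrictAntiOn betaSeq (Set.Ici 1) := by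
  refine strictAntiOn_Ici_of_lt_pred fun n hn => ?_
  obtain ⟨m, rfl⟩ := Nat.exists_eq_add_of_lt hn
  simpa [Order.pred_eq_sub_one] using betaSeq_succ_lt (Nat.le_add_right 1 m)

theorem tendsto_one_sub_inv_pow_exp :
    Tendsto (fun n : ℕ => (1 - 1 / (n : ℝ)) ^ n) atTop (𝓝 (Real.exp (-1))) :=
  (Real.tendsto_one_add_div_pow_exp (-1)).congr fun n => by ring

theorem tendsto_betaSeq : Tendsto betaSeq atTop (𝓝 (2 / Real.exp 1)) := by
  have hbase : Tendsto (fun n : ℕ => 1 - 1 / (n : ℝ)) atTop (𝓝 1) := by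
    simpa using tendsto_one_div_atTop_nhds_zero_nat.const_sub (1 : ℝ)
  have hpred : Tendsto (fun n : ℕ => (1 - 1 / (n : ℝ)) ^ (n - 1)) atTop (𝓝 (Real.exp (-1))) := by
    refine (div_one (Real.exp (-1)) ▸ tendsto_one_sub_inv_pow_exp.div hbase one_ne_zero).congr' ?_
    filter_upwards [eventually_ge_atTop 2] with n hn
    have hn2 : (2 : ℝ) ≤ n := by exact_mod_cast hn
    have hne : 1 - 1 / (n : ℝ) ≠ 0 := (sub_pos.2 ((div_lt_one (by linarith)).2 (by linarith))).ne'
    exact (eq_div_of_mul_eq hne (pow_sub_one_mul (by omega) _)).symm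
  have hsum := tendsto_one_sub_inv_pow_exp.add hpred
  rwa [← two_mul, Real.exp_neg, ← div_eq_mul_inv] at hsum

theorem beta_seq_strictAnti_tendsto :
    (∀ m n : ℕ, 1 ≤ m → m < n →
      (1 - 1 / (n : ℝ)) ^ n + (1 - 1 / (n : ℝ)) ^ (n - 1)
        < (1 - 1 / (m : ℝ)) ^ m + (1 - 1 / (m : ℝ)) ^ (m - 1)) ∧
    Filter.Tendsto
      (fun n : ℕ => (1 - 1 / (n : ℝ)) ^ n + (1 - 1 / (n : ℝ)) ^ (n - 1))
      Filter.atTop (nhds (2 / Real.exp 1)) :=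
  ⟨fun _ _ hm hmn => betaSeq_strictAntiOn hm (hm.trans hmn.le : 1 ≤ _) hmn, tendsto_betaSeq⟩
end

section
/- For n ≥ 2, β_n := (1-1/n)^n + (1-1/n)^{n-1} ≤ 3/4. -/
/-!
With `n = m + 1` we have `1 - 1/n = (1 + 1/m)⁻¹`, so the left-hand side equals
`(2 - 1/n) / (1 + 1/m)^m`, and the claim is the lower bound `(1 + 1/m)^m ≥ 8/3 - 4/(3n)`.
The binomial expansion of `(1 + 1/m)^m` truncated after its cubic term exceeds `8/3 - 4/(3n)`
by exactly `(m - 1)² / (3 m² (m + 1))`, which is nonnegative (and zero for `n = 2`, where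
the inequality is an equality).
-/

open Finset

theorem Nat.cast_choose_three {K : Type*} [Field K] [CharZero K] (m : ℕ) :
    (m.choose 3 : K) = m * (m - 1) * (m - 2) / 6 := by
  have h : (m.descFactorial 3 : K) = 6 * m.choose 3 := by
    exact_mod_cast Nat.descFactorial_eq_factorial_mul_choose m 3
  rw [← descPochhammer_eval_eq_descFactorial] at h
  simp only [descPochhammer_succ_eval, descPochhammer_zero, Polynomial.eval_one] at h
  linear_combination -h / 6

theorem sum_range_choose_mul_pow_le_one_add_pow {R : Type*} [CommSemiring R] [PartialOrder R]
    [IsOrderedRing R] {t : R} (ht : 0 ≤ t) (m N : ℕ) :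
    ∑ k ∈ range N, (m.choose k : R) * t ^ k ≤ (1 + t) ^ m := by
  have hexpand : (1 + t) ^ m = ∑ k ∈ range (N + m + 1), (m.choose k : R) * t ^ k := by
    rw [add_comm, add_pow]
    simp_rw [one_pow, mul_one, mul_comm (t ^ _)]
    refine sum_subset (range_subset_range.2 (by omega)) fun k _ hk => ?_
    simp [Nat.choose_eq_zero_of_lt (by simpa using hk : m < k)]
  rw [hexpand]
  exact sum_le_sum_of_subset_of_nonneg (range_subset_range.2 (by omega))
    fun k _ _ => by positivity

theorem eight_thirds_sub_le_one_add_inv_pow {m : ℕ} (hm : 0 < m) :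
    8 / 3 - 4 / (3 * (m + 1)) ≤ (1 + 1 / m : ℝ) ^ m := by
  have hm' : (0 : ℝ) < m := by exact_mod_cast hm
  have hcubic := sum_range_choose_mul_pow_le_one_add_pow (t := 1 / (m : ℝ)) (by positivity) m 4
  simp only [sum_range_succ, sum_range_zero, Nat.choose_zero_right, Nat.choose_one_right,
    Nat.cast_choose_two, Nat.cast_choose_three] at hcubic
  refine le_trans (sub_nonneg.1 ?_) hcubic
  calc (0 : ℝ) ≤ (m - 1) ^ 2 / (3 * m ^ 2 * (m + 1)) := by positivity
    _ = _ := by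
      field_simp
      ring

theorem beta_seq_le_three_quarters (n : ℕ) (hn : 2 ≤ n) :
    (1 - 1 / (n : ℝ)) ^ n + (1 - 1 / (n : ℝ)) ^ (n - 1) ≤ 3 / 4 := by
  obtain ⟨m, rfl⟩ : ∃ m, n = m + 1 := ⟨n - 1, by omega⟩
  have hm : 0 < m := by omega
  have hx : 1 - 1 / ((m + 1 : ℕ) : ℝ) = (1 + 1 / (m : ℝ))⁻¹ := by
    push_cast
    field_simp
    ring
  rw [Nat.add_sub_cancel, hx, pow_succ, ← mul_add_one, inv_pow, inv_mul_eq_div,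
    div_le_iff₀ (by positivity)]
  calc (1 + 1 / (m : ℝ))⁻¹ + 1 = 3 / 4 * (8 / 3 - 4 / (3 * (m + 1))) := by
        field_simp
        ring
    _ ≤ 3 / 4 * (1 + 1 / m) ^ m := by gcongr; exact eight_thirds_sub_le_one_add_inv_pow hm
end
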